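/- Let U ⊆ ℝ² be open and let y, z, p : U → ℝ be smooth functions such that the map f(u,v) = (u, y(u,v), z(u,v), p(u,v), v) satisfies the contact condition on U (i.e. z_u = p + v·y_u and z_v = v·y_v on U) and the Hess = 1 condition on U (which for this f reads y_v = p_u on U). Then p_v = −y_u and p_u = y_v hold on U, so p and y satisfy the Cauchy–Riemann equations; consequently the function F, defined on the open set {w ∈ ℂ : (Re w, Im w) ∈ U} by F(w) = p(Re w, Im w) + i·y(Re w, Im w), is complex differentiable at every point of its domain. -/

import Mathlib

noncomputable section

/-- Partial derivative in the direction `(1,0)`. -/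
def pu (g : ℝ × ℝ → ℝ) (a : ℝ × ℝ) : ℝ := fderiv ℝ g a (1, 0)

/-- Partial derivative in the direction `(0,1)`. -/
def pv (g : ℝ × ℝ → ℝ) (a : ℝ × ℝ) : ℝ := fderiv ℝ g a (0, 1)

lemma hasFDerivAt_applyDir {g : ℝ × ℝ → ℝ} {a : ℝ × ℝ}
    (hg : ContDiffAt ℝ (⊤ : ℕ∞) g a) (v : ℝ × ℝ) :
    HasFDerivAt (fun b => fderiv ℝ g b v)
      ((ContinuousLinearMap.apply ℝ ℝ v).comp (fderiv ℝ (fderiv ℝ g) a)) a := by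
  have h1 : ContDiffAt ℝ 1 (fderiv ℝ g) a := hg.fderiv_right (by exact le_trans (by norm_num) (WithTop.coe_le_coe.2 (le_top : (2:ℕ∞) ≤ ⊤)))
  exact (ContinuousLinearMap.apply ℝ ℝ v).hasFDerivAt.comp a
    (h1.differentiableAt one_ne_zero).hasFDerivAt

lemma eval_dir (L : ℝ × ℝ →L[ℝ] ℝ) (s t : ℝ) :
    L (s, t) = s * L (1, 0) + t * L (0, 1) := by
  have : (s, t) = s • ((1 : ℝ), (0 : ℝ)) + t • ((0 : ℝ), (1 : ℝ)) := by
    simp [Prod.ext_iff]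
  rw [this, map_add, map_smul, map_smul]; simp [mul_comm]

/-- For a geometric solution `f(u,v) = (u, y, z, p, v)` to Hess = 1,
the functions `p` and `y` satisfy the Cauchy–Riemann equations, and
`F = p + i y` is complex differentiable on its domain. -/
theorem stmt3 (U : Set (ℝ × ℝ)) (hU : IsOpen U)
    (y z p : ℝ × ℝ → ℝ)
    (hy : ContDiffOn ℝ (⊤ : ℕ∞) y U) (hz : ContDiffOn ℝ (⊤ : ℕ∞) z U)
    (hp : ContDiffOn ℝ (⊤ : ℕ∞) p U)
    (hcontact : ∀ a ∈ U, pu z a = p a + a.2 * pu y a ∧ pv z a = a.2 * pv y a)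
    (hhess : ∀ a ∈ U, pv y a = pu p a) :
    (∀ a ∈ U, pv p a = - pu y a ∧ pu p a = pv y a) ∧
    ∀ w : ℂ, (w.re, w.im) ∈ U →
      DifferentiableAt ℂ
        (fun w : ℂ => (p (w.re, w.im) : ℂ) + Complex.I * (y (w.re, w.im) : ℂ)) w := by
  have key : ∀ a ∈ U, pv p a = - pu y a ∧ pu p a = pv y a := by
    intro a ha
    have hUa : U ∈ nhds a := hU.mem_nhds ha
    have hya : ContDiffAt ℝ (⊤ : ℕ∞) y a := hy.contDiffAt hUa
    have hza : ContDiffAt ℝ (⊤ : ℕ∞) z a := hz.contDiffAt hUa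
    have hpa : ContDiffAt ℝ (⊤ : ℕ∞) p a := hp.contDiffAt hUa
    have hpd : DifferentiableAt ℝ p a := hpa.differentiableAt (by simp)
    -- second derivatives
    set Dz := fderiv ℝ (fderiv ℝ z) a with hDz
    set Dy := fderiv ℝ (fderiv ℝ y) a with hDy
    have symz : ∀ v w, Dz v w = Dz w v := hza.isSymmSndFDerivAt (by exact le_trans (by norm_num) (WithTop.coe_le_coe.2 (le_top : (2:ℕ∞) ≤ ⊤)))
    have symy : ∀ v w, Dy v w = Dy w v := hya.isSymmSndFDerivAt (by exact le_trans (by norm_num) (WithTop.coe_le_coe.2 (le_top : (2:ℕ∞) ≤ ⊤)))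
    -- derivative of (b ↦ fderiv y b (1,0)) etc.
    have hyu := hasFDerivAt_applyDir hya ((1 : ℝ), (0 : ℝ))
    have hyv := hasFDerivAt_applyDir hya ((0 : ℝ), (1 : ℝ))
    have hzu := hasFDerivAt_applyDir hza ((1 : ℝ), (0 : ℝ))
    have hzv := hasFDerivAt_applyDir hza ((0 : ℝ), (1 : ℝ))
    -- first contact equation, near a
    have e1 : (fun b => fderiv ℝ z b ((1 : ℝ), (0 : ℝ)))
        =ᶠ[nhds a] fun b => p b + b.2 * fderiv ℝ y b ((1 : ℝ), (0 : ℝ)) := by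
      filter_upwards [hUa] with b hb
      exact (hcontact b hb).1
    have e2 : (fun b => fderiv ℝ z b ((0 : ℝ), (1 : ℝ)))
        =ᶠ[nhds a] fun b => b.2 * fderiv ℝ y b ((0 : ℝ), (1 : ℝ)) := by
      filter_upwards [hUa] with b hb
      exact (hcontact b hb).2
    -- derivative of the right-hand sides
    have hsnd : HasFDerivAt (fun b : ℝ × ℝ => b.2) (ContinuousLinearMap.snd ℝ ℝ ℝ) a :=
      hasFDerivAt_snd
    have hR1 : HasFDerivAt (fun b => p b + b.2 * fderiv ℝ y b ((1 : ℝ), (0 : ℝ)))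
        (fderiv ℝ p a +
          (a.2 • ((ContinuousLinearMap.apply ℝ ℝ ((1 : ℝ), (0 : ℝ))).comp Dy) +
            fderiv ℝ y a ((1 : ℝ), (0 : ℝ)) • ContinuousLinearMap.snd ℝ ℝ ℝ)) a :=
      hpd.hasFDerivAt.add (hsnd.mul hyu)
    have hR2 : HasFDerivAt (fun b => b.2 * fderiv ℝ y b ((0 : ℝ), (1 : ℝ)))
        (a.2 • ((ContinuousLinearMap.apply ℝ ℝ ((0 : ℝ), (1 : ℝ))).comp Dy) +
          fderiv ℝ y a ((0 : ℝ), (1 : ℝ)) • ContinuousLinearMap.snd ℝ ℝ ℝ) a :=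
      hsnd.mul hyv
    -- transfer derivatives through the eventual equalities and use uniqueness
    have hL1 := (hzu.congr_of_eventuallyEq e1.symm).unique hR1
    have hL2 := (hzv.congr_of_eventuallyEq e2.symm).unique hR2
    have c1 := congrArg (fun L : ℝ × ℝ →L[ℝ] ℝ => L ((0 : ℝ), (1 : ℝ))) hL1
    have c2 := congrArg (fun L : ℝ × ℝ →L[ℝ] ℝ => L ((1 : ℝ), (0 : ℝ))) hL2
    simp only [ContinuousLinearMap.add_apply, ContinuousLinearMap.smul_apply,
      ContinuousLinearMap.comp_apply, ContinuousLinearMap.apply_apply,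
      ContinuousLinearMap.coe_snd', smul_eq_mul] at c1 c2
    -- c1 : Dz (0,1) (1,0) = fderiv p a (0,1) + (a.2 * Dy (0,1) (1,0) + yu a * 1)
    -- c2 : Dz (1,0) (0,1) = a.2 * Dy (1,0) (0,1) + yv a * 0
    have hmix : Dz ((0 : ℝ), (1 : ℝ)) ((1 : ℝ), (0 : ℝ))
        = Dz ((1 : ℝ), (0 : ℝ)) ((0 : ℝ), (1 : ℝ)) := symz _ _
    have hmixy : Dy ((0 : ℝ), (1 : ℝ)) ((1 : ℝ), (0 : ℝ))
        = Dy ((1 : ℝ), (0 : ℝ)) ((0 : ℝ), (1 : ℝ)) := symy _ _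
    constructor
    · have : fderiv ℝ p a ((0 : ℝ), (1 : ℝ)) = - fderiv ℝ y a ((1 : ℝ), (0 : ℝ)) := by
        rw [hmix, c2] at c1
        rw [hmixy] at c1
        linarith
      simpa [pv, pu] using this
    · exact (hhess a ha).symm
  refine ⟨key, ?_⟩
  intro w hw
  set a : ℝ × ℝ := (w.re, w.im) with ha
  have hUa : U ∈ nhds a := hU.mem_nhds hw
  have hpd : DifferentiableAt ℝ p a :=
    (hp.contDiffAt hUa).differentiableAt (by simp)
  have hyd : DifferentiableAt ℝ y a :=
    (hy.contDiffAt hUa).differentiableAt (by simp)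
  set c : ℂ := (pu p a : ℂ) + Complex.I * (pu y a : ℂ) with hc
  -- real derivative of the inner map G : ℝ × ℝ → ℂ
  have hG : HasFDerivAt (fun x : ℝ × ℝ => (p x : ℂ) + Complex.I * (y x : ℂ))
      (Complex.ofRealCLM.comp (fderiv ℝ p a) +
        Complex.I • (Complex.ofRealCLM.comp (fderiv ℝ y a))) a := by
    have h1 : HasFDerivAt (fun x : ℝ × ℝ => (p x : ℂ))
        (Complex.ofRealCLM.comp (fderiv ℝ p a)) a :=
      Complex.ofRealCLM.hasFDerivAt.comp a hpd.hasFDerivAt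
    have h2 : HasFDerivAt (fun x : ℝ × ℝ => (y x : ℂ))
        (Complex.ofRealCLM.comp (fderiv ℝ y a)) a :=
      Complex.ofRealCLM.hasFDerivAt.comp a hyd.hasFDerivAt
    exact h1.add (h2.const_mul Complex.I)
  have hφ : HasFDerivAt (fun w : ℂ => ((w.re, w.im) : ℝ × ℝ))
      (Complex.equivRealProdCLM.toContinuousLinearMap) w :=
    Complex.equivRealProdCLM.hasFDerivAt
  have hF : HasFDerivAt
      (fun w : ℂ => (p (w.re, w.im) : ℂ) + Complex.I * (y (w.re, w.im) : ℂ))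
      ((Complex.ofRealCLM.comp (fderiv ℝ p a) +
        Complex.I • (Complex.ofRealCLM.comp (fderiv ℝ y a))).comp
          Complex.equivRealProdCLM.toContinuousLinearMap) w := hG.comp w hφ
  -- the real derivative is the restriction of a complex-linear map
  have hCR := key a hw
  have heq : ((1 : ℂ →L[ℂ] ℂ).smulRight c).restrictScalars ℝ =
      ((Complex.ofRealCLM.comp (fderiv ℝ p a) +
        Complex.I • (Complex.ofRealCLM.comp (fderiv ℝ y a))).comp
          Complex.equivRealProdCLM.toContinuousLinearMap) := by
    ext x
    simp only [ContinuousLinearMap.coe_restrictScalars', ContinuousLinearMap.smulRight_apply,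
      ContinuousLinearMap.one_apply, ContinuousLinearMap.comp_apply,
      ContinuousLinearMap.add_apply, ContinuousLinearMap.smul_apply,
      ContinuousLinearEquiv.coe_coe, Complex.equivRealProdCLM_apply,
      Complex.ofRealCLM_apply, smul_eq_mul]
    have h1 : fderiv ℝ p a ((0 : ℝ), (1 : ℝ)) = - fderiv ℝ y a ((1 : ℝ), (0 : ℝ)) := by
      simpa [pu, pv] using hCR.1
    have h2 : fderiv ℝ p a ((1 : ℝ), (0 : ℝ)) = fderiv ℝ y a ((0 : ℝ), (1 : ℝ)) := by
      simpa [pu, pv] using hCR.2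
    rw [eval_dir (fderiv ℝ p a), eval_dir (fderiv ℝ y a), h1, ← h2, hc]
    simp only [pu]
    apply Complex.ext <;>
      simp [Complex.add_re, Complex.add_im, Complex.mul_re, Complex.mul_im] <;> ring
  have : HasFDerivAt
      (fun w : ℂ => (p (w.re, w.im) : ℂ) + Complex.I * (y (w.re, w.im) : ℂ))
      ((1 : ℂ →L[ℂ] ℂ).smulRight c) w :=
    hasFDerivAt_of_restrictScalars ℝ hF heq
  exact this.differentiableAt
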